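/- arXiv:2508.18030 — 2 statements merged into one kernel-verified Lean document; each statement's English description precedes it below -/
import Mathlib

section
/- Let m be an odd positive integer and let (a,b) ∈ F_{2^m} × F_{2^m} with (a,b) ≠ (0,0). Define the integer S_3 = Σ_{x ∈ F_{2^m}^*} Σ_{y ∈ F_{2^m}} (−1)^{Tr(yx² + x + y) + Tr(axy + bx)}. Then: S_3 = −2^m if a = 0, b ≠ 0 and Tr(b) = 0; S_3 = 2^m if a = 0, b ≠ 0 and Tr(b) = 1; S_3 = 0 if a ∉ Υ1 ∪ {0}, or if a ∈ Υ1 and Tr((b+1)a) = 1; and S_3 = 2^{m+1} or S_3 = −2^{m+1} if a ∈ Υ1 and Tr((b+1)a) = 0. -/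
attribute [local instance] Classical.propDecidable

noncomputable instance (m : ℕ) : Fintype (GaloisField 2 m) := Fintype.ofFinite _

/-- The absolute trace map from `F_{2^m}` to `F_2`. -/
noncomputable def Tr (m : ℕ) (x : GaloisField 2 m) : ZMod 2 :=
  Algebra.trace (ZMod 2) (GaloisField 2 m) x

/-- For `t ∈ F_2`, `sgn t` is the integer `(-1)^t`. -/
def sgn : ZMod 2 → ℤ := fun t => if t = 0 then 1 else -1

/-- The set `Υ₁ = {r + r⁻¹ : r ∈ F_{2^m}^*, r ≠ 1}`. -/
def Ups1 (m : ℕ) : Set (GaloisField 2 m) :=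
  {u | ∃ r : GaloisField 2 m, r ≠ 0 ∧ r ≠ 1 ∧ u = r + r⁻¹}

/-! By additivity of the trace the exponent is `Tr(y (x² + a x + 1)) + Tr((b + 1) x)`. As `m` is
odd, `Tr 1 = 1`, so summing over `y` kills every `x` that is not a root of `x² + a x + 1`, and
`S₃ = 2^m ∑ (-1)^{Tr((b+1)x)}` over those roots. For `a = 0` the only root is `1`; for `a ≠ 0`
the roots are the `r` with `a = r + r⁻¹`, so there are none when `a ∉ Υ₁`, and two, `r` and `r⁻¹`,
when `a ∈ Υ₁`. Their signs agree exactly when `Tr((b + 1) a) = Tr((b + 1) r) + Tr((b + 1) r⁻¹)`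
vanishes. -/

section Sgn

lemma sgn_add (s t : ZMod 2) : sgn (s + t) = sgn s * sgn t := by revert s t; decide

lemma sgn_add_one (t : ZMod 2) : sgn (t + 1) = -sgn t := by revert t; decide

lemma sgn_eq_one_or_eq_neg_one (t : ZMod 2) : sgn t = 1 ∨ sgn t = -1 := by revert t; decide

lemma sgn_add_sgn (s t : ZMod 2) : sgn s + sgn t = sgn s * (1 + sgn (s + t)) := by
  revert s t; decide

lemma sum_sgn_eq_zero {G : Type*} [AddCommGroup G] [Fintype G] (f : G →+ ZMod 2) {e : G}
    (he : f e = 1) : ∑ g, sgn (f g) = 0 := by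
  have h : ∑ g, sgn (f g) = -∑ g, sgn (f g) := by
    rw [← Finset.sum_neg_distrib, ← Equiv.sum_comp (Equiv.addRight e)]
    simp only [Equiv.coe_addRight, map_add, he, sgn_add_one]
  linarith

end Sgn

section CharTwo

variable {K : Type*} [Field K]

lemma eq_one_of_sq_eq_one [CharP K 2] {x : K} (hx : x ^ 2 = 1) : x = 1 := by
  have h : (x + 1) ^ 2 = 0 := by rw [CharTwo.add_sq, hx, one_pow, CharTwo.add_self_eq_zero]
  exact CharTwo.add_eq_zero.mp (pow_eq_zero_iff two_ne_zero |>.mp h)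

lemma inv_ne_self_of_ne_one [CharP K 2] {r : K} (hr0 : r ≠ 0) (hr1 : r ≠ 1) : r⁻¹ ≠ r := by
  intro h
  refine hr1 (eq_one_of_sq_eq_one ?_)
  rw [sq]
  nth_rw 1 [← h]
  exact inv_mul_cancel₀ hr0

lemma quadratic_root_ne_zero {a x : K} (hx : x ^ 2 + a * x + 1 = 0) : x ≠ 0 := by
  rintro rfl
  simp at hx

lemma eq_add_inv_of_quadratic_root [CharP K 2] {a x : K} (hx : x ^ 2 + a * x + 1 = 0) :
    a = x + x⁻¹ := by
  have hx0 := quadratic_root_ne_zero hx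
  field_simp
  linear_combination hx - (1 + x ^ 2) * CharTwo.two_eq_zero (R := K)

/-- In characteristic two, `x² + (r + r⁻¹) x + 1 = (x + r) (x + r⁻¹)`. -/
lemma quadratic_root_iff [CharP K 2] {a r : K} (hr0 : r ≠ 0) (ha : a = r + r⁻¹) (x : K) :
    x ^ 2 + a * x + 1 = 0 ↔ x = r ∨ x = r⁻¹ := by
  have hfac : x ^ 2 + a * x + 1 = (x + r) * (x + r⁻¹) := by
    rw [ha]; field_simp; ring
  rw [hfac, mul_eq_zero, CharTwo.add_eq_zero, CharTwo.add_eq_zero]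

lemma filter_quadratic_root_eq_pair [Fintype K] [CharP K 2] {a r : K} (hr0 : r ≠ 0)
    (ha : a = r + r⁻¹) : Finset.univ.filter (fun x => x ^ 2 + a * x + 1 = 0) = {r, r⁻¹} := by
  ext x
  simp only [Finset.mem_filter, Finset.mem_univ, true_and, Finset.mem_insert,
    Finset.mem_singleton, quadratic_root_iff hr0 ha]

end CharTwo

section Trace

variable {m : ℕ}

lemma Tr_add (x y : GaloisField 2 m) : Tr m (x + y) = Tr m x + Tr m y :=
  map_add (Algebra.trace (ZMod 2) (GaloisField 2 m)) x y

/-- `Tr 1 = [F_{2^m} : F_2] = m` in `F_2`. -/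
lemma Tr_one (hodd : Odd m) : Tr m 1 = 1 := by
  rw [Tr, ← map_one (algebraMap (ZMod 2) (GaloisField 2 m)), Algebra.trace_algebraMap,
    GaloisField.finrank 2 hodd.pos.ne', nsmul_eq_mul, mul_one,
    ← ZMod.natCast_mod, Nat.odd_iff.mp hodd, Nat.cast_one]

lemma sum_sgn_Tr_mul (hodd : Odd m) (c : GaloisField 2 m) :
    ∑ y, sgn (Tr m (y * c)) = if c = 0 then (2 ^ m : ℤ) else 0 := by
  split_ifs with hc
  · subst hc
    simp [Tr, sgn, ← Nat.card_eq_fintype_card, GaloisField.card 2 m hodd.pos.ne']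
  · have h := sum_sgn_eq_zero
      ((Algebra.trace (ZMod 2) (GaloisField 2 m)).toAddMonoidHom.comp (AddMonoidHom.mulRight c))
      (e := c⁻¹) (by simpa [Tr, inv_mul_cancel₀ hc] using Tr_one hodd)
    simpa [Tr] using h

lemma sum_sgn_Tr_eq_two_pow_mul_sum_roots (hodd : Odd m) (a b : GaloisField 2 m) :
    ∑ x ∈ Finset.univ.filter (fun x : GaloisField 2 m => x ≠ 0),
      ∑ y, sgn (Tr m (y * x ^ 2 + x + y) + Tr m (a * x * y + b * x)) =
    2 ^ m * ∑ x ∈ Finset.univ.filter (fun x : GaloisField 2 m => x ^ 2 + a * x + 1 = 0),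
      sgn (Tr m ((b + 1) * x)) := by
  have inner (x : GaloisField 2 m) :
      ∑ y, sgn (Tr m (y * x ^ 2 + x + y) + Tr m (a * x * y + b * x)) =
        if x ^ 2 + a * x + 1 = 0 then 2 ^ m * sgn (Tr m ((b + 1) * x)) else 0 := by
    have h (y : GaloisField 2 m) : Tr m (y * x ^ 2 + x + y) + Tr m (a * x * y + b * x) =
        Tr m (y * (x ^ 2 + a * x + 1)) + Tr m ((b + 1) * x) := by
      rw [← Tr_add, ← Tr_add]; ring_nf
    simp only [h, sgn_add, ← Finset.sum_mul, sum_sgn_Tr_mul hodd, ite_mul, zero_mul]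
  have roots_ne_zero : ((Finset.univ.filter fun x : GaloisField 2 m => x ≠ 0).filter
      fun x => x ^ 2 + a * x + 1 = 0) = Finset.univ.filter fun x => x ^ 2 + a * x + 1 = 0 := by
    rw [Finset.filter_filter]
    exact Finset.filter_congr fun x _ => and_iff_right_of_imp quadratic_root_ne_zero
  rw [Finset.sum_congr rfl fun x _ => inner x, ← Finset.sum_filter, roots_ne_zero, Finset.mul_sum]

lemma mem_Ups1_of_quadratic_root {a x : GaloisField 2 m} (ha : a ≠ 0)
    (hx : x ^ 2 + a * x + 1 = 0) : a ∈ Ups1 m := by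
  have hax := eq_add_inv_of_quadratic_root hx
  refine ⟨x, quadratic_root_ne_zero hx, ?_, hax⟩
  rintro rfl
  exact ha (by rw [hax, inv_one, CharTwo.add_self_eq_zero])

lemma sum_sgn_Tr_roots_of_eq_zero (hodd : Odd m) (b : GaloisField 2 m) :
    ∑ x ∈ Finset.univ.filter (fun x : GaloisField 2 m => x ^ 2 + 0 * x + 1 = 0),
      sgn (Tr m ((b + 1) * x)) = -sgn (Tr m b) := by
  rw [filter_quadratic_root_eq_pair one_ne_zero (by rw [inv_one, CharTwo.add_self_eq_zero]),
    inv_one, Finset.pair_eq_singleton, Finset.sum_singleton, mul_one, Tr_add, Tr_one hodd,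
    sgn_add_one]

lemma sum_sgn_Tr_roots_of_mem_Ups1 {a : GaloisField 2 m} (ha : a ∈ Ups1 m)
    (b : GaloisField 2 m) :
    ∃ s : ZMod 2, ∑ x ∈ Finset.univ.filter (fun x : GaloisField 2 m => x ^ 2 + a * x + 1 = 0),
      sgn (Tr m ((b + 1) * x)) = sgn s * (1 + sgn (Tr m ((b + 1) * a))) := by
  obtain ⟨r, hr0, hr1, rfl⟩ := ha
  refine ⟨Tr m ((b + 1) * r), ?_⟩
  rw [filter_quadratic_root_eq_pair hr0 rfl,
    Finset.sum_pair (inv_ne_self_of_ne_one hr0 hr1).symm, sgn_add_sgn, ← Tr_add, ← mul_add]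

end Trace

theorem stmt6_general (m : ℕ) (hodd : Odd m) (a b : GaloisField 2 m) :
    let S3 : ℤ := ∑ x ∈ Finset.univ.filter (fun x : GaloisField 2 m => x ≠ 0),
      ∑ y : GaloisField 2 m, sgn (Tr m (y * x ^ 2 + x + y) + Tr m (a * x * y + b * x))
    (a = 0 → b ≠ 0 → Tr m b = 0 → S3 = -(2 ^ m : ℤ)) ∧
    (a = 0 → b ≠ 0 → Tr m b = 1 → S3 = 2 ^ m) ∧
    (a ∉ Ups1 m → a ≠ 0 → S3 = 0) ∧
    (a ∈ Ups1 m → Tr m ((b + 1) * a) = 1 → S3 = 0) ∧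
    (a ∈ Ups1 m → Tr m ((b + 1) * a) = 0 →
      S3 = 2 ^ (m + 1) ∨ S3 = -(2 ^ (m + 1) : ℤ)) := by
  intro S3
  have hS3 : S3 = _ := sum_sgn_Tr_eq_two_pow_mul_sum_roots hodd a b
  refine ⟨fun ha _ htr => ?_, fun ha _ htr => ?_, fun hU ha => ?_, fun hU htr => ?_,
    fun hU htr => ?_⟩
  · subst ha
    rw [hS3, sum_sgn_Tr_roots_of_eq_zero hodd, htr]
    simp [sgn]
  · subst ha
    rw [hS3, sum_sgn_Tr_roots_of_eq_zero hodd, htr]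
    simp [sgn]
  · rw [hS3, Finset.filter_false_of_mem fun x _ hx => hU (mem_Ups1_of_quadratic_root ha hx),
      Finset.sum_empty, mul_zero]
  · obtain ⟨s, hs⟩ := sum_sgn_Tr_roots_of_mem_Ups1 hU b
    rw [hS3, hs, htr]
    simp [sgn]
  · obtain ⟨s, hs⟩ := sum_sgn_Tr_roots_of_mem_Ups1 hU b
    rw [hS3, hs, htr, show sgn 0 = 1 from rfl, pow_succ]
    rcases sgn_eq_one_or_eq_neg_one s with h | h <;> rw [h]
    · left; ring
    · right; ring

theorem stmt6 (m : ℕ) (hm : 0 < m) (hodd : Odd m) (a b : GaloisField 2 m)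
    (hab : (a, b) ≠ (0, 0)) :
    let S3 : ℤ := ∑ x ∈ Finset.univ.filter (fun x : GaloisField 2 m => x ≠ 0),
      ∑ y : GaloisField 2 m, sgn (Tr m (y * x ^ 2 + x + y) + Tr m (a * x * y + b * x))
    (a = 0 → b ≠ 0 → Tr m b = 0 → S3 = -(2 ^ m : ℤ)) ∧
    (a = 0 → b ≠ 0 → Tr m b = 1 → S3 = 2 ^ m) ∧
    (a ∉ Ups1 m → a ≠ 0 → S3 = 0) ∧
    (a ∈ Ups1 m → Tr m ((b + 1) * a) = 1 → S3 = 0) ∧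
    (a ∈ Ups1 m → Tr m ((b + 1) * a) = 0 →
      S3 = 2 ^ (m + 1) ∨ S3 = -(2 ^ (m + 1) : ℤ)) :=
  stmt6_general m hodd a b
end

section
/- Let m ≥ 3. Then the binary code C_{D_1} is minimal: for all (a,b), (a',b') ∈ F_{2^m} × F_{2^m} such that the codewords c(a,b) and c(a',b') are both nonzero, if the support of c(a',b') is contained in the support of c(a,b) (i.e., for every (x,y) ∈ D_1, Tr(a'xy + b'x) = 1 implies Tr(axy + bx) = 1), then c(a',b') = c(a,b) (i.e., Tr(a'xy + b'x) = Tr(axy + bx) for every (x,y) ∈ D_1). -/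
attribute [local instance] Classical.propDecidable

/-!
For fixed `x ≠ 0`, the codeword `c(a, b)` restricted to the hyperplane `Tr ((x² + 1) y) = 0` is the
affine form `y ↦ Tr (a x y) + Tr (b x)`. By nondegeneracy of the trace form, if one affine form on a
hyperplane takes the value `1` somewhere, and only where a second one does, then the second one
either agrees with it on the hyperplane or is constantly `1` there; the latter needs
`a x ∈ {0, x² + 1}`, i.e. `a = 0` or `x² + a x + 1 = 0`. Applied at `x = 1`, where the hyperplane is
the whole field, and at the other `x`, this forces `(a, b) = (a', b')`: the exceptional points, `0`
and the at most two roots of a quadratic, are too few to contain a nonempty fibre of a trace form,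
which has at least `2^(m-1) ≥ 4` elements.
-/

open Algebra

instance charP_two_of_algebra_zmod {L : Type*} [Field L] [Algebra (ZMod 2) L] : CharP L 2 :=
  charP_of_injective_algebraMap' (ZMod 2) 2

section TraceForm

variable {K L : Type*} [Field K] [Field L] [Algebra K L] [FiniteDimensional K L]
  [Algebra.IsSeparable K L]

theorem mem_span_of_forall_trace_mul_eq_zero (s : Set L) [Finite s] (w : L)
    (h : ∀ y, (∀ u ∈ s, trace K L (u * y) = 0) → trace K L (w * y) = 0) :
    w ∈ Submodule.span K s := by
  let e := (traceForm K L).toDual (traceForm_nondegenerate K L)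
  have he : ∀ u y, e u y = trace K L (u * y) := fun u y => by
    rw [LinearMap.BilinForm.toDual_def, traceForm_apply]
  have hspan : e w ∈ Submodule.span K (Set.range fun u : s => e u) := by
    refine mem_span_of_iInf_ker_le_ker fun y hy => ?_
    simp only [Submodule.mem_iInf, LinearMap.mem_ker, he] at hy ⊢
    exact h y fun u hu => hy ⟨u, hu⟩
  rw [Set.range_comp' e Subtype.val, Subtype.range_coe, ← LinearEquiv.coe_coe,
    Submodule.apply_mem_span_image_iff_mem_span e.injective] at hspan
  exact hspan

end TraceForm

theorem ZMod.two_eq_zero_or_one (t : ZMod 2) : t = 0 ∨ t = 1 := by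
  fin_cases t
  exacts [.inl rfl, .inr rfl]

section CharTwo

variable {R : Type*} [CommRing R] [IsDomain R] [CharP R 2]

theorem eq_or_eq_add_of_sq_add_mul_add_one_eq_zero {α r z : R} (hr : r ^ 2 + α * r + 1 = 0)
    (hz : z ^ 2 + α * z + 1 = 0) : z = r ∨ z = r + α := by
  have h : (z + r) * (z + r + α) = 0 := by
    linear_combination hz + hr + (z * r - 1) * CharTwo.two_eq_zero (R := R)
  rcases mul_eq_zero.mp h with h | h
  · exact .inl (CharTwo.add_eq_zero.mp h)
  · exact .inr (CharTwo.add_eq_zero.mp (by rwa [← add_assoc]))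

theorem ncard_sq_add_mul_add_one_eq_zero_le (α : R) :
    {x : R | x ^ 2 + α * x + 1 = 0}.ncard ≤ 2 := by
  rcases Set.eq_empty_or_nonempty {x : R | x ^ 2 + α * x + 1 = 0} with h | ⟨r, hr⟩
  · simp [h]
  calc _ ≤ ({r, r + α} : Set R).ncard :=
        Set.ncard_le_ncard (fun z hz => eq_or_eq_add_of_sq_add_mul_add_one_eq_zero hr hz)
    _ ≤ 2 := (Set.ncard_insert_le _ _).trans (by simp)

theorem eq_zero_of_mul_eq_zero_or_eq {a x : R} (hx : x ≠ 0) (hroot : x ^ 2 + a * x + 1 ≠ 0)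
    (h : a * x = 0 ∨ a * x = x ^ 2 + 1) : a = 0 := by
  rcases h with h | h
  · exact (mul_eq_zero.mp h).resolve_right hx
  · exact absurd (by linear_combination h + (x ^ 2 + 1) * CharTwo.two_eq_zero (R := R)) hroot

end CharTwo

section BinaryTrace

variable {L : Type*} [Field L] [Finite L] [Algebra (ZMod 2) L]

theorem exists_trace_mul_eq_zero_and_eq {u v : L} (hv : v ≠ 0) (hvu : v ≠ u) (t : ZMod 2) :
    ∃ y, trace (ZMod 2) L (u * y) = 0 ∧ trace (ZMod 2) L (v * y) = t := by
  rcases t.two_eq_zero_or_one with rfl | rfl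
  · exact ⟨0, by simp, by simp⟩
  by_contra! h
  have hv_mem : v ∈ Submodule.span (ZMod 2) {u} :=
    mem_span_of_forall_trace_mul_eq_zero {u} v fun y hy =>
      ((trace (ZMod 2) L (v * y)).two_eq_zero_or_one).resolve_right (h y (hy u rfl))
  obtain ⟨c, rfl⟩ := Submodule.mem_span_singleton.mp hv_mem
  rcases c.two_eq_zero_or_one with rfl | rfl
  · exact hv (zero_smul _ u)
  · exact hvu (one_smul _ u)

theorem trace_affine_dichotomy {u v v' : L} {β β' : ZMod 2}
    (hne : ∃ y, trace (ZMod 2) L (u * y) = 0 ∧ trace (ZMod 2) L (v' * y) + β' = 1)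
    (hsub : ∀ y, trace (ZMod 2) L (u * y) = 0 → trace (ZMod 2) L (v' * y) + β' = 1 →
      trace (ZMod 2) L (v * y) + β = 1) :
    ((v = 0 ∨ v = u) ∧ β = 1) ∨ ((v = v' ∨ v = v' + u) ∧ β = β') := by
  obtain ⟨y₀, hu₀, hv'₀⟩ := hne
  have hv₀ := hsub y₀ hu₀ hv'₀
  have hker : ∀ y, (∀ w ∈ ({u, v'} : Set L), trace (ZMod 2) L (w * y) = 0) →
      trace (ZMod 2) L (v * y) = 0 := fun y hy => by
    have hu := hy u (by simp)
    have hv' := hy v' (by simp)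
    have := hsub (y₀ + y) (by rw [mul_add, map_add, hu₀, hu, add_zero])
      (by rw [mul_add, map_add, hv', add_zero, hv'₀])
    rw [mul_add, map_add] at this
    linear_combination this - hv₀
  obtain ⟨c, c', rfl⟩ :=
    Submodule.mem_span_pair.mp (mem_span_of_forall_trace_mul_eq_zero _ v hker)
  rcases c.two_eq_zero_or_one with rfl | rfl <;> rcases c'.two_eq_zero_or_one with rfl | rfl <;>
    simp only [zero_smul, one_smul, zero_add, add_zero, add_mul, map_add, zero_mul, map_zero] at hv₀
  · exact .inl ⟨.inl (by simp), hv₀⟩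
  · exact .inr ⟨.inl (by simp), by linear_combination hv₀ - hv'₀⟩
  · exact .inl ⟨.inr (by simp), by rwa [hu₀, zero_add] at hv₀⟩
  · exact .inr ⟨.inr (by simp [add_comm]), by linear_combination hv₀ - hv'₀ - hu₀⟩

theorem card_le_two_mul_ncard_of_trace_fiber_subset {c z : L} {t : ZMod 2} {S : Set L}
    (hz : trace (ZMod 2) L (c * z) = t) (hS : ∀ x, trace (ZMod 2) L (c * x) = t → x ∈ S) :
    Nat.card L ≤ 2 * S.ncard := by
  let f : L →+ ZMod 2 := (trace (ZMod 2) L).toAddMonoidHom.comp (AddMonoidHom.mulLeft c)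
  have hrange : Nat.card f.range ≤ 2 := by
    simpa using Finite.card_subtype_le (fun t => t ∈ f.range)
  have hker : Nat.card f.ker ≤ S.ncard := by
    rw [← Nat.card_coe_set_eq]
    refine Set.ncard_le_ncard_of_injOn (· + z) (fun y hy => hS _ ?_) (add_left_injective z).injOn
    simpa [f, mul_add, hz] using hy
  rw [← f.ker.card_mul_index, AddSubgroup.index_ker]
  nlinarith

theorem exists_ne_zero_not_root_of_trace_mul_eq (hL : 8 ≤ Nat.card L) {c z : L} {t : ZMod 2}
    (hz : trace (ZMod 2) L (c * z) = t) (α : L) :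
    ∃ x, trace (ZMod 2) L (c * x) = t ∧ x ≠ 0 ∧ x ^ 2 + α * x + 1 ≠ 0 := by
  by_contra! h
  have hcard := card_le_two_mul_ncard_of_trace_fiber_subset
    (S := insert 0 {x | x ^ 2 + α * x + 1 = 0}) hz fun x hx => or_iff_not_imp_left.mpr (h x hx)
  have hS := (Set.ncard_insert_le 0 _).trans
    (Nat.succ_le_succ (ncard_sq_add_mul_add_one_eq_zero_le α))
  omega

end BinaryTrace

section Code

variable {L : Type*} [Field L] [Algebra (ZMod 2) L]

variable (L) in
def D₁ : Set (L × L) := {p | p.1 ≠ 0 ∧ trace (ZMod 2) L (p.2 * p.1 ^ 2 + p.2) = 0}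

def codewordSupport (a b : L) : Set (L × L) :=
  {p ∈ D₁ L | trace (ZMod 2) L (a * p.1 * p.2 + b * p.1) = 1}

variable [Finite L] {a b a' b' : L}

theorem dichotomy_of_codewordSupport_subset (h : codewordSupport a' b' ⊆ codewordSupport a b)
    {x : L} (hx : x ≠ 0)
    (hne : ∃ y, trace (ZMod 2) L ((x ^ 2 + 1) * y) = 0 ∧
      trace (ZMod 2) L (a' * x * y) + trace (ZMod 2) L (b' * x) = 1) :
    ((a * x = 0 ∨ a * x = x ^ 2 + 1) ∧ trace (ZMod 2) L (b * x) = 1) ∨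
      ((a * x = a' * x ∨ a * x = a' * x + (x ^ 2 + 1)) ∧
        trace (ZMod 2) L (b * x) = trace (ZMod 2) L (b' * x)) := by
  refine trace_affine_dichotomy hne fun y hy hy' => ?_
  have hxy : (x, y) ∈ codewordSupport a b :=
    h ⟨⟨hx, by convert hy using 2; ring⟩, by rwa [map_add]⟩
  rw [← map_add]
  exact hxy.2

theorem dichotomy_of_codewordSupport_subset_of_ne_zero
    (h : codewordSupport a' b' ⊆ codewordSupport a b) (ha' : a' ≠ 0) {x : L} (hx : x ≠ 0)
    (hroot : x ^ 2 + a' * x + 1 ≠ 0) :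
    ((a * x = 0 ∨ a * x = x ^ 2 + 1) ∧ trace (ZMod 2) L (b * x) = 1) ∨
      ((a * x = a' * x ∨ a * x = a' * x + (x ^ 2 + 1)) ∧
        trace (ZMod 2) L (b * x) = trace (ZMod 2) L (b' * x)) := by
  have hne : a' * x ≠ x ^ 2 + 1 := fun he =>
    hroot (by linear_combination he + (x ^ 2 + 1) * CharTwo.two_eq_zero (R := L))
  obtain ⟨y, hy, hy'⟩ :=
    exists_trace_mul_eq_zero_and_eq (mul_ne_zero ha' hx) hne (1 + trace (ZMod 2) L (b' * x))
  refine dichotomy_of_codewordSupport_subset h hx ⟨y, hy, ?_⟩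
  rw [hy', add_assoc, CharTwo.add_self_eq_zero, add_zero]

theorem eq_of_codewordSupport_subset_of_ne_zero (hL : 8 ≤ Nat.card L) (ha' : a' ≠ 0)
    (h : codewordSupport a' b' ⊆ codewordSupport a b) : a = a' ∧ b = b' := by
  have h₁ := dichotomy_of_codewordSupport_subset_of_ne_zero h ha' one_ne_zero
    (by rwa [one_pow, mul_one, add_right_comm, CharTwo.add_self_eq_zero, zero_add])
  simp only [mul_one, one_pow, CharTwo.add_self_eq_zero, add_zero, or_self] at h₁
  rcases h₁ with ⟨rfl, -⟩ | ⟨ha, -⟩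
  · exfalso
    obtain ⟨x, hbx, hx, hroot⟩ :=
      exists_ne_zero_not_root_of_trace_mul_eq hL (c := b) (z := 0) (t := 0) (by simp) a'
    rcases dichotomy_of_codewordSupport_subset_of_ne_zero h ha' hx hroot with
      ⟨-, hbx'⟩ | ⟨hax, -⟩
    · simp [hbx] at hbx'
    · rw [zero_mul] at hax
      exact ha' (eq_zero_of_mul_eq_zero_or_eq hx hroot
        (hax.imp Eq.symm fun hax => CharTwo.add_eq_zero.mp hax.symm))
  refine ⟨ha, ?_⟩
  subst ha
  by_contra hbb
  have hd : b + b' ≠ 0 := fun h0 => hbb (CharTwo.add_eq_zero.mp h0)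
  obtain ⟨z, -, hz⟩ := exists_trace_mul_eq_zero_and_eq (u := 0) hd hd 1
  obtain ⟨x, hdx, hx, hroot⟩ := exists_ne_zero_not_root_of_trace_mul_eq hL hz a
  rcases dichotomy_of_codewordSupport_subset_of_ne_zero h ha' hx hroot with ⟨hax, -⟩ | ⟨-, hbx⟩
  · exact ha' (eq_zero_of_mul_eq_zero_or_eq hx hroot hax)
  · rw [add_mul, map_add, hbx, CharTwo.add_self_eq_zero] at hdx
    exact zero_ne_one hdx

theorem eq_of_codewordSupport_subset_of_eq_zero (hL : 8 ≤ Nat.card L) (ha' : a' = 0)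
    (hne : (codewordSupport a' b').Nonempty) (h : codewordSupport a' b' ⊆ codewordSupport a b) :
    a = a' ∧ b = b' := by
  subst ha'
  obtain ⟨⟨x₀, y₀⟩, -, h₀⟩ := hne
  simp only [zero_mul, zero_add] at h₀
  have key : ∀ x, trace (ZMod 2) L (b' * x) = 1 →
      (a * x = 0 ∨ a * x = x ^ 2 + 1) ∧ trace (ZMod 2) L (b * x) = 1 := by
    intro x hx
    have hx₀ : x ≠ 0 := by
      rintro rfl
      simp at hx
    rcases dichotomy_of_codewordSupport_subset h hx₀ ⟨0, by simp, by simpa using hx⟩ with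
      hax | ⟨hax, hbx⟩
    · exact hax
    · simp only [zero_mul, zero_add] at hax
      exact ⟨hax, hbx.trans hx⟩
  obtain ⟨x, hbx, hx, hroot⟩ := exists_ne_zero_not_root_of_trace_mul_eq hL h₀ a
  refine ⟨eq_zero_of_mul_eq_zero_or_eq hx hroot (key x hbx).1, ?_⟩
  have hb := trace_affine_dichotomy (u := 0) (v := b) (v' := b') (β := 0) (β' := 0)
    ⟨x₀, by simp, by simpa using h₀⟩ fun y _ hy => by simpa using (key y (by simpa using hy)).2
  rcases hb with ⟨-, h01⟩ | ⟨hb, -⟩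
  · exact absurd h01 zero_ne_one
  · simpa using hb

theorem eq_of_codewordSupport_subset (hL : 8 ≤ Nat.card L)
    (hne : (codewordSupport a' b').Nonempty) (h : codewordSupport a' b' ⊆ codewordSupport a b) :
    a = a' ∧ b = b' := by
  by_cases ha' : a' = 0
  · exact eq_of_codewordSupport_subset_of_eq_zero hL ha' hne h
  · exact eq_of_codewordSupport_subset_of_ne_zero hL ha' h

end Code

theorem stmt16_general (m : ℕ) (hm : 3 ≤ m) (a b a' b' : GaloisField 2 m)
    (hne' : ∃ x y : GaloisField 2 m, x ≠ 0 ∧ Tr m (y * x ^ 2 + y) = 0 ∧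
      Tr m (a' * x * y + b' * x) = 1)
    (hsupp : ∀ x y : GaloisField 2 m, x ≠ 0 → Tr m (y * x ^ 2 + y) = 0 →
      Tr m (a' * x * y + b' * x) = 1 → Tr m (a * x * y + b * x) = 1) :
    ∀ x y : GaloisField 2 m, x ≠ 0 → Tr m (y * x ^ 2 + y) = 0 →
      Tr m (a' * x * y + b' * x) = Tr m (a * x * y + b * x) := by
  have hcard : 8 ≤ Nat.card (GaloisField 2 m) := by
    rw [GaloisField.card 2 m (by omega)]
    exact Nat.pow_le_pow_right two_pos hm
  obtain ⟨rfl, rfl⟩ := eq_of_codewordSupport_subset hcard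
    (by obtain ⟨x, y, hx, hy, h⟩ := hne'; exact ⟨(x, y), ⟨hx, hy⟩, h⟩)
    (by rintro ⟨x, y⟩ ⟨⟨hx, hy⟩, h⟩; exact ⟨⟨hx, hy⟩, hsupp x y hx hy h⟩)
  exact fun _ _ _ _ => rfl

theorem stmt16 (m : ℕ) (hm : 3 ≤ m) (a b a' b' : GaloisField 2 m)
    (hne : ∃ x y : GaloisField 2 m, x ≠ 0 ∧ Tr m (y * x ^ 2 + y) = 0 ∧
      Tr m (a * x * y + b * x) = 1)
    (hne' : ∃ x y : GaloisField 2 m, x ≠ 0 ∧ Tr m (y * x ^ 2 + y) = 0 ∧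
      Tr m (a' * x * y + b' * x) = 1)
    (hsupp : ∀ x y : GaloisField 2 m, x ≠ 0 → Tr m (y * x ^ 2 + y) = 0 →
      Tr m (a' * x * y + b' * x) = 1 → Tr m (a * x * y + b * x) = 1) :
    ∀ x y : GaloisField 2 m, x ≠ 0 → Tr m (y * x ^ 2 + y) = 0 →
      Tr m (a' * x * y + b' * x) = Tr m (a * x * y + b * x) :=
  stmt16_general m hm a b a' b' hne' hsupp
end
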